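/- The generating function Sav_{312}(z) = Σ_{n≥0} Sav_n(312) zⁿ satisfies Sav_{312}(z) = (-z³+z²+z-1)/(z⁴-2z³+z²+2z-1); equivalently, the sequence Sav_n(312) satisfies the linear recurrence determined by this rational function, with initial values 1, 1, 2, 4, 9, 19, 41 for n = 0,...,6. -/

import Mathlib

def Avoids312 {n : ℕ} (p : Equiv.Perm (Fin n)) : Prop :=
  ¬ ∃ a b c : Fin n, a < b ∧ b < c ∧ p b < p c ∧ p c < p a

def StronglyAvoids312 {n : ℕ} (p : Equiv.Perm (Fin n)) : Prop :=
  Avoids312 p ∧ Avoids312 (p * p)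

noncomputable def Sav312 (n : ℕ) : ℕ :=
  Nat.card {p : Equiv.Perm (Fin n) // StronglyAvoids312 p}

/-!
Let `p` avoid 312 and let `s` be the position of its value `0`. Every value before `s` is smaller
than every value after it (otherwise the two together with `0` form a 312), so `p` is the direct
sum of a permutation of size `s + 1` ending in `0` and a permutation of size `n - s`. Squaring
respects direct sums, hence `Sav_{n+1} = ∑ₛ E_s Sav_{n-s}`, where `E_s` counts the strongly
312-avoiding permutations of size `m = s + 1` ending in `0`.

These are exactly `k, k + 1, …, m - 1, k - 1, …, 1, 0` with `m ≤ 2k` (or `m = 1`). The tail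
`k - 1, …, 0` is forced from the right: a misplaced value produces a 312 in `p` or in `p²`, or, by
counting, contradicts the fact that `p²` maps the positions up to that of `m - 1` onto themselves
(that position carries the value `0` of `p²`). On the first `m - k` positions `p` takes values
`≥ k ≥ m - k`, i.e. tail positions, so there `p² = m - 1 - p`; as `p` starts with its minimum `k`
and `p²` avoids 312, `p` increases on them. So `E_s = max 1 ⌊(s + 1) / 2⌋`, whose generating function `G`
satisfies `G (1 - z - z² + z³) = 1 - z² + z³`, and `F = 1 + z G F` gives the rational form of `F`.
-/

namespace Pattern312

open Equiv Finset

/-- A permutation of `Fin n` as a function on `ℕ`, extended by the identity, so that index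
arithmetic can be left to `omega`. -/
def natApply {n : ℕ} (p : Perm (Fin n)) (i : ℕ) : ℕ :=
  if h : i < n then p ⟨i, h⟩ else i

section NatApply

variable {n : ℕ} (p q : Perm (Fin n))

lemma natApply_of_lt {i : ℕ} (h : i < n) : natApply p i = p ⟨i, h⟩ := dif_pos h

@[simp] lemma natApply_coe (i : Fin n) : natApply p i = p i := natApply_of_lt p i.2

lemma natApply_lt {i : ℕ} (h : i < n) : natApply p i < n := by
  rw [natApply_of_lt p h]; exact Fin.is_lt _

lemma natApply_mul : natApply (p * q) = natApply p ∘ natApply q := by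
  funext i
  by_cases h : i < n
  · simp [natApply_of_lt _ h]
  · simp [natApply, h]

lemma natApply_symm_natApply (i : ℕ) : natApply p.symm (natApply p i) = i := by
  by_cases h : i < n
  · simp [natApply_of_lt _ h]
  · simp [natApply, h]

lemma natApply_injective : Function.Injective (natApply p) :=
  Function.LeftInverse.injective (natApply_symm_natApply p)

lemma bijOn_natApply : Set.BijOn (natApply p) (Set.Iio n) (Set.Iio n) :=
  ⟨fun _ hi => natApply_lt p hi, (natApply_injective p).injOn, fun v hv =>
    ⟨natApply p.symm v, natApply_lt p.symm hv, by simpa using natApply_symm_natApply p.symm v⟩⟩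

lemma eq_of_natApply_eq {p q : Perm (Fin n)} (h : ∀ i < n, natApply p i = natApply q i) :
    p = q :=
  Equiv.ext fun i => Fin.ext (by simpa using h i i.2)

end NatApply

noncomputable def permOfInjOn (n : ℕ) (f : ℕ → ℕ) (hf : Set.MapsTo f (Set.Iio n) (Set.Iio n))
    (hinj : Set.InjOn f (Set.Iio n)) : Perm (Fin n) :=
  Equiv.ofBijective (fun i => ⟨f i, hf i.2⟩) <| Finite.injective_iff_bijective.mp
    fun i j h => Fin.ext (hinj i.2 j.2 (congrArg Fin.val h))

lemma natApply_permOfInjOn {n : ℕ} {f : ℕ → ℕ} (hf : Set.MapsTo f (Set.Iio n) (Set.Iio n))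
    (hinj : Set.InjOn f (Set.Iio n)) {i : ℕ} (hi : i < n) :
    natApply (permOfInjOn n f hf hinj) i = f i := by
  simp [natApply_of_lt _ hi, permOfInjOn]

def AvoidsOn312 (n : ℕ) (f : ℕ → ℕ) : Prop :=
  ∀ ⦃a b c⦄, a < b → b < c → c < n → f b < f c → f c < f a → False

lemma avoids312_iff {n : ℕ} (p : Perm (Fin n)) : Avoids312 p ↔ AvoidsOn312 n (natApply p) := by
  constructor
  · rintro h a b c hab hbc hc h1 h2
    have hb : b < n := hbc.trans hc
    have ha : a < n := hab.trans hb
    simp only [natApply_of_lt p ha, natApply_of_lt p hb, natApply_of_lt p hc] at h1 h2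
    exact h ⟨⟨a, ha⟩, ⟨b, hb⟩, ⟨c, hc⟩, hab, hbc, h1, h2⟩
  · rintro h ⟨a, b, c, hab, hbc, h1, h2⟩
    exact h hab hbc c.2 (by simpa using h1) (by simpa using h2)

lemma avoids312_mul_self_iff {n : ℕ} (p : Perm (Fin n)) :
    Avoids312 (p * p) ↔ AvoidsOn312 n (natApply p ∘ natApply p) := by
  rw [avoids312_iff, natApply_mul]

namespace AvoidsOn312

variable {n : ℕ} {f : ℕ → ℕ}

lemma congr {g : ℕ → ℕ} (h : ∀ i < n, f i = g i) : AvoidsOn312 n f ↔ AvoidsOn312 n g := by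
  refine ⟨fun hf a b c hab hbc hc h1 h2 => ?_, fun hg a b c hab hbc hc h1 h2 => ?_⟩
  · rw [← h a (by omega), ← h b (by omega), ← h c hc] at *
    exact hf hab hbc hc h1 h2
  · rw [h a (by omega), h b (by omega), h c hc] at *
    exact hg hab hbc hc h1 h2

lemma lt_of_lt_of_eq_zero (hf : AvoidsOn312 n f) (hinj : Set.InjOn f (Set.Iio n)) {s i c : ℕ}
    (h0 : f s = 0) (hi : i < s) (hc : s < c) (hcn : c < n) : f i < f c := by
  have hs : s < n := hc.trans hcn
  have hc0 : f c ≠ 0 := fun h => by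
    have := hinj hcn hs (h.trans h0.symm); omega
  have hci : f c ≠ f i := fun h => by
    have := hinj hcn (show i < n by omega) h; omega
  by_contra h
  exact hf hi hc hcn (by omega) (by omega)

lemma le_iff_of_eq_zero (hf : AvoidsOn312 n f) (hbij : Set.BijOn f (Set.Iio n) (Set.Iio n))
    {s : ℕ} (hs : s < n) (h0 : f s = 0) {i : ℕ} (hi : i < n) : f i ≤ s ↔ i ≤ s := by
  have le_of_le : ∀ x ≤ s, f x ≤ s := by
    intro x hx
    rcases hx.lt_or_eq with hx | rfl
    · by_contra hfx
      -- the `n - 1 - s` positions after `s` would carry values in `(f x, n)`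
      have := card_le_card_of_injOn f (s := Ioo s n) (t := Ioo (f x) n)
        (fun c hc => by
          simp only [coe_Ioo, Set.mem_Ioo] at hc ⊢
          exact ⟨hf.lt_of_lt_of_eq_zero hbij.injOn h0 hx hc.1 hc.2, hbij.mapsTo hc.2⟩)
        (hbij.injOn.mono fun c hc => by
          simp only [coe_Ioo, Set.mem_Ioo, Set.mem_Iio] at hc ⊢; omega)
      have hfx' : f x < n := hbij.mapsTo (show x < n by omega)
      simp only [Nat.card_Ioo] at this
      omega
    · omega
  refine ⟨fun hfi => ?_, le_of_le i⟩
  by_contra his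
  -- otherwise `f` would map the `s + 2` positions `[0, s] ∪ {i}` injectively into `[0, s]`
  have := card_le_card_of_injOn f (s := insert i (Iic s)) (t := Iic s)
    (fun x hx => by
      simp only [coe_insert, coe_Iic, Set.mem_insert_iff, Set.mem_Iic] at hx ⊢
      rcases hx with rfl | hx
      · exact hfi
      · exact le_of_le x hx)
    (hbij.injOn.mono fun x hx => by
      simp only [coe_insert, coe_Iic, Set.mem_insert_iff, Set.mem_Iic, Set.mem_Iio] at hx ⊢; omega)
  rw [card_insert_of_notMem (by simp only [mem_Iic, not_le]; omega), Nat.card_Iic] at this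
  omega

lemma lt_of_eq_max (hf : AvoidsOn312 n f) (hbij : Set.BijOn f (Set.Iio n) (Set.Iio n))
    {P u e : ℕ} (hP : f P = n - 1) (hPu : P < u) (hue : u < e) (he : e < n) : f e < f u := by
  have hfe : f e < n := hbij.mapsTo he
  have hfe' : f e ≠ f P := fun h => by have := hbij.injOn he (show P < n by omega) h; omega
  have hfu : f u ≠ f e := fun h => by have := hbij.injOn (show u < n by omega) he h; omega
  by_contra hle
  exact hf hPu hue he (by omega) (by omega)

end AvoidsOn312

lemma avoidsOn312_piecewise_iff {a b : ℕ} {f g : ℕ → ℕ} (hf : ∀ i < a, f i < a) :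
    AvoidsOn312 (a + b) (fun i => if i < a then f i else a + g (i - a)) ↔
      AvoidsOn312 a f ∧ AvoidsOn312 b g := by
  refine ⟨fun h => ⟨fun x y z hxy hyz hz h1 h2 => ?_, fun x y z hxy hyz hz h1 h2 => ?_⟩, ?_⟩
  · exact h hxy hyz (by omega) (by simpa [show x < a by omega, show y < a by omega, hz] using h1)
      (by simpa [show x < a by omega, hz] using h2)
  · exact h (a := a + x) (b := a + y) (c := a + z) (by omega) (by omega) (by omega)
      (by simpa using h1) (by simpa using h2)
  · rintro ⟨hf', hg⟩ x y z hxy hyz hz h1 h2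
    by_cases hza : z < a
    · simp only [hza, show x < a by omega, show y < a by omega, if_true] at h1 h2
      exact hf' hxy hyz hza h1 h2
    by_cases hya : y < a
    · have := hf x (by omega)
      simp only [hza, hya, show x < a by omega, if_true, if_false] at h1 h2
      omega
    by_cases hxa : x < a
    · have := hf x hxa
      simp only [hza, hxa, if_true, if_false] at h2
      omega
    simp only [hza, hya, hxa, if_false, add_lt_add_iff_left] at h1 h2
    exact hg (by omega : x - a < y - a) (by omega) (by omega) h1 h2

section DirectSum

variable {a b n : ℕ}

noncomputable def directSum (hab : a + b = n) (q : Perm (Fin a)) (r : Perm (Fin b)) :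
    Perm (Fin n) :=
  permOfInjOn n (fun i => if i < a then natApply q i else a + natApply r (i - a))
    (fun ⦃i⦄ hi => by
      have := natApply_lt q (i := i); have := natApply_lt r (i := i - a)
      simp only [Set.mem_Iio] at hi ⊢; split_ifs <;> omega)
    (fun ⦃i⦄ _ ⦃j⦄ _ hij => by
      have := natApply_lt q (i := i); have := natApply_lt q (i := j)
      have hq := @natApply_injective _ q i j
      have hr := @natApply_injective _ r (i - a) (j - a)
      dsimp only at hij
      split_ifs at hij <;> first | exact hq hij | omega)

variable (hab : a + b = n) (q q' : Perm (Fin a)) (r r' : Perm (Fin b))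

lemma natApply_directSum {i : ℕ} (hi : i < n) :
    natApply (directSum hab q r) i = if i < a then natApply q i else a + natApply r (i - a) :=
  natApply_permOfInjOn _ _ hi

lemma directSum_mul :
    directSum hab q r * directSum hab q' r' = directSum hab (q * q') (r * r') := by
  refine eq_of_natApply_eq fun i hi => ?_
  simp only [natApply_mul, Function.comp_apply, natApply_directSum hab _ _ hi]
  split_ifs with h
  · rw [natApply_directSum hab _ _ (by have := natApply_lt q' h; omega), if_pos (natApply_lt q' h)]
  · have := natApply_lt r' (i := i - a) (by omega)
    rw [natApply_directSum hab _ _ (by omega), if_neg (by omega), Nat.add_sub_cancel_left]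

lemma avoids312_directSum_iff : Avoids312 (directSum hab q r) ↔ Avoids312 q ∧ Avoids312 r := by
  subst hab
  rw [avoids312_iff, avoids312_iff, avoids312_iff,
    ← avoidsOn312_piecewise_iff fun i hi => natApply_lt q hi]
  exact AvoidsOn312.congr fun i hi => natApply_directSum rfl q r hi

lemma stronglyAvoids312_directSum_iff :
    StronglyAvoids312 (directSum hab q r) ↔ StronglyAvoids312 q ∧ StronglyAvoids312 r := by
  simp only [StronglyAvoids312, directSum_mul, avoids312_directSum_iff]
  tauto

end DirectSum

lemma exists_directSum_eq {k b n : ℕ} (hab : k + 1 + b = n) (p : Perm (Fin n)) (hp : Avoids312 p)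
    (h0 : natApply p k = 0) : ∃ q r, directSum hab q r = p := by
  have hle : ∀ i < n, natApply p i ≤ k ↔ i ≤ k := fun i hi =>
    ((avoids312_iff p).1 hp).le_iff_of_eq_zero (bijOn_natApply p) (by omega) h0 hi
  have hlt : ∀ i < n, natApply p i < n := fun i hi => natApply_lt p hi
  have hq : Set.MapsTo (natApply p) (Set.Iio (k + 1)) (Set.Iio (k + 1)) := fun i hi => by
    simp only [Set.mem_Iio] at hi ⊢
    have := (hle i (by omega)).2; omega
  have hr : Set.MapsTo (fun i => natApply p (k + 1 + i) - (k + 1)) (Set.Iio b) (Set.Iio b) :=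
    fun i hi => by
      simp only [Set.mem_Iio] at hi ⊢
      have := (hle (k + 1 + i) (by omega)).1; have := hlt (k + 1 + i) (by omega); omega
  have hr' : Set.InjOn (fun i => natApply p (k + 1 + i) - (k + 1)) (Set.Iio b) :=
    fun i hi j hj hij => by
      simp only [Set.mem_Iio] at hi hj
      have := (hle (k + 1 + i) (by omega)).1; have := (hle (k + 1 + j) (by omega)).1
      have := @natApply_injective _ p (k + 1 + i) (k + 1 + j) (by dsimp only at hij; omega)
      omega
  refine ⟨permOfInjOn _ _ hq (natApply_injective p).injOn, permOfInjOn _ _ hr hr',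
    eq_of_natApply_eq fun i hi => ?_⟩
  rw [natApply_directSum _ _ _ hi]
  split_ifs with h
  · exact natApply_permOfInjOn _ _ h
  · have := (hle i hi).1
    rw [natApply_permOfInjOn _ _ (by omega), Nat.add_sub_cancel' (by omega : k + 1 ≤ i)]
    omega

lemma directSum_inj {a b n : ℕ} (hab : a + b = n) {q q' : Perm (Fin a)} {r r' : Perm (Fin b)} :
    directSum hab q r = directSum hab q' r' ↔ q = q' ∧ r = r' := by
  refine ⟨fun h => ⟨eq_of_natApply_eq fun i hi => ?_, eq_of_natApply_eq fun i hi => ?_⟩,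
    fun ⟨hq, hr⟩ => hq ▸ hr ▸ rfl⟩
  · simpa [natApply_directSum hab _ _ (show i < n by omega), hi] using
      congrArg (natApply · i) h
  · simpa [natApply_directSum hab _ _ (show a + i < n by omega)] using
      congrArg (natApply · (a + i)) h

noncomputable def savLastZero (k : ℕ) : ℕ :=
  Nat.card {q : Perm (Fin (k + 1)) // StronglyAvoids312 q ∧ natApply q k = 0}

lemma card_stronglyAvoids312_natApply_eq_zero {k b n : ℕ} (hab : k + 1 + b = n) :
    Nat.card {p : Perm (Fin n) // StronglyAvoids312 p ∧ natApply p k = 0} =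
      savLastZero k * Sav312 b := by
  rw [savLastZero, Sav312, ← Nat.card_prod]
  symm
  refine Nat.card_eq_of_bijective (fun qr => ⟨directSum hab qr.1.1 qr.2.1, ?_⟩) ⟨?_, ?_⟩
  · rw [stronglyAvoids312_directSum_iff, natApply_directSum _ _ _ (by omega), if_pos k.lt_succ_self]
    exact ⟨⟨qr.1.2.1, qr.2.2⟩, qr.1.2.2⟩
  · rintro ⟨⟨q, hq⟩, ⟨r, hr⟩⟩ ⟨⟨q', hq'⟩, ⟨r', hr'⟩⟩ h
    obtain ⟨rfl, rfl⟩ := (directSum_inj hab).1 (congrArg Subtype.val h)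
    rfl
  · rintro ⟨p, hp, hp0⟩
    obtain ⟨q, r, rfl⟩ := exists_directSum_eq hab p hp.1 hp0
    obtain ⟨hq, hr⟩ := (stronglyAvoids312_directSum_iff hab q r).1 hp
    rw [natApply_directSum _ _ _ (by omega), if_pos k.lt_succ_self] at hp0
    exact ⟨⟨⟨q, hq, hp0⟩, ⟨r, hr⟩⟩, rfl⟩

lemma sav312_succ (n : ℕ) :
    Sav312 (n + 1) = ∑ x ∈ antidiagonal n, savLastZero x.1 * Sav312 x.2 := by
  classical
  have hfib : ∀ k ∈ range (n + 1),
      #{p : Perm (Fin (n + 1)) | StronglyAvoids312 p ∧ natApply p.symm 0 = k} =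
        savLastZero k * Sav312 (n - k) := by
    intro k hk
    have hk' : k + 1 + (n - k) = n + 1 := by have := mem_range.1 hk; omega
    rw [← card_stronglyAvoids312_natApply_eq_zero hk',
      Nat.card_eq_fintype_card, Fintype.card_subtype]
    congr! 3 with p
    constructor
    · rintro rfl; simpa using natApply_symm_natApply p.symm 0
    · intro h; rw [← h, natApply_symm_natApply]
  rw [Nat.sum_antidiagonal_eq_sum_range_succ_mk, ← sum_congr rfl hfib,
    Sav312, Nat.card_eq_fintype_card, Fintype.card_subtype,
    card_eq_sum_card_fiberwise (f := fun p => natApply p.symm 0) (t := range (n + 1))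
      fun p _ => mem_range.2 (natApply_lt _ (Nat.succ_pos n))]
  simp only [filter_filter]

/-- The permutation `m - j, …, m - 1, m - j - 1, …, 1, 0` in one-line notation. -/
def blockFun (m j i : ℕ) : ℕ := if i < j then m - j + i else m - 1 - i

lemma blockFun_lt {m j i : ℕ} (hi : i < m) : blockFun m j i < m := by
  unfold blockFun; split_ifs <;> omega

noncomputable def blockPerm (m j : ℕ) : Perm (Fin m) :=
  permOfInjOn m (blockFun m j) (fun _ hi => blockFun_lt hi)
    (fun i hi i' hi' h => by
      simp only [Set.mem_Iio, blockFun] at hi hi' h; split_ifs at h <;> omega)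

lemma natApply_blockPerm {m j i : ℕ} (hi : i < m) : natApply (blockPerm m j) i = blockFun m j i :=
  natApply_permOfInjOn _ _ hi

lemma stronglyAvoids312_blockPerm {m j : ℕ} (hj : j ≤ max 1 (m / 2)) :
    StronglyAvoids312 (blockPerm m j) := by
  rw [StronglyAvoids312, avoids312_iff, avoids312_mul_self_iff]
  have hsq : ∀ i < m, (natApply (blockPerm m j) ∘ natApply (blockPerm m j)) i =
      blockFun m j (blockFun m j i) := fun i hi => by
    rw [Function.comp_apply, natApply_blockPerm hi, natApply_blockPerm (blockFun_lt hi)]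
  refine ⟨(AvoidsOn312.congr fun i hi => natApply_blockPerm hi).2 ?_,
    (AvoidsOn312.congr hsq).2 ?_⟩ <;>
  · intro a b c hab hbc hc h1 h2
    simp only [blockFun] at h1 h2
    split_ifs at h1 h2 <;> omega

structure IsStrong312LastZero (m : ℕ) (Q : ℕ → ℕ) : Prop where
  bijOn : Set.BijOn Q (Set.Iio m) (Set.Iio m)
  avoids : AvoidsOn312 m Q
  avoids_sq : AvoidsOn312 m (Q ∘ Q)
  last : Q (m - 1) = 0

namespace IsStrong312LastZero

variable {m : ℕ} {Q : ℕ → ℕ}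

lemma lt (h : IsStrong312LastZero m Q) {i : ℕ} (hi : i < m) : Q i < m := h.bijOn.mapsTo hi

lemma inj (h : IsStrong312LastZero m Q) {i j : ℕ} (hi : i < m) (hj : j < m) (hij : Q i = Q j) :
    i = j :=
  h.bijOn.injOn hi hj hij

lemma exists_eq (h : IsStrong312LastZero m Q) {v : ℕ} (hv : v < m) : ∃ i < m, Q i = v := by
  obtain ⟨i, hi, rfl⟩ := h.bijOn.surjOn hv
  exact ⟨i, hi, rfl⟩

lemma pos_Q_zero (h : IsStrong312LastZero m Q) (hm : 2 ≤ m) : 0 < Q 0 :=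
  Nat.pos_of_ne_zero fun h0 => by
    have := h.inj (show 0 < m by omega) (show m - 1 < m by omega) (h0.trans h.last.symm); omega

lemma sq_le_iff (h : IsStrong312LastZero m Q) {P : ℕ} (hP : P < m) (hQP : Q P = m - 1)
    {i : ℕ} (hi : i < m) : Q (Q i) ≤ P ↔ i ≤ P :=
  h.avoids_sq.le_iff_of_eq_zero (h.bijOn.comp h.bijOn) hP
    (by simp only [Function.comp_apply, hQP, h.last]) hi

lemma lt_Q_zero (h : IsStrong312LastZero m Q) (hm : 2 ≤ m) {P : ℕ} (hP : P < m)
    (hQP : Q P = m - 1) : P < Q 0 := by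
  have hPm : P ≠ m - 1 := by rintro rfl; have := h.last; omega
  by_contra hle
  exact hPm (le_antisymm (by omega) ((h.sq_le_iff hP hQP (by omega)).1 (by rw [h.last]; omega)))

lemma exists_of_tail (h : IsStrong312LastZero m Q) (hm : 2 ≤ m) {v : ℕ} (hv : v < Q 0)
    (tail : ∀ z, m - 1 - v < z → z < m → Q z = m - 1 - z) (hne : Q (m - 1 - v) ≠ v) :
    ∃ y, 0 < y ∧ y < m - 1 - v ∧ Q y = v ∧ Q 0 < Q (m - 1 - v) := by
  have hQ0 := h.lt (show 0 < m by omega)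
  obtain ⟨y, hym, hy⟩ := h.exists_eq (show v < m by omega)
  have hye : y < m - 1 - v := by
    rcases lt_trichotomy y (m - 1 - v) with hlt | rfl | hgt
    · exact hlt
    · exact absurd hy hne
    · have := tail y hgt hym; omega
  have hy0 : 0 < y := Nat.pos_of_ne_zero fun hy0 => by subst hy0; omega
  refine ⟨y, hy0, hye, hy, ?_⟩
  have hve : v < Q (m - 1 - v) := by
    by_contra hle
    have := tail (m - 1 - Q (m - 1 - v)) (by omega) (by omega)
    have := h.inj (show m - 1 - v < m by omega) (show m - 1 - Q (m - 1 - v) < m by omega)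
      (by omega)
    omega
  have hle : Q 0 ≤ Q (m - 1 - v) := by
    by_contra hlt
    exact h.avoids hy0 hye (by omega) (by omega) (by omega)
  have hne0 : Q (m - 1 - v) ≠ Q 0 := fun h' => by
    have := h.inj (show m - 1 - v < m by omega) (show 0 < m by omega) h'; omega
  omega

lemma false_of_lt_on_Icc_of_lt_on_Ioo (h : IsStrong312LastZero m Q) {P e : ℕ} (hP : P < m)
    (hQP : Q P = m - 1) (hPe : P ≤ e) (he : e < m) (hbig : ∀ u, P ≤ u → u ≤ e → P < Q u)
    (hsmall : ∀ x, e < x → x < m → Q x < P) : False := by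
  -- the `e - P + 1` values in `[P, e]` would have to sit at the `e - P` positions in `(P, e]`
  have := card_le_card_of_surjOn Q (s := Ioc P e) (t := Icc P e) fun u hu => by
    simp only [coe_Icc, Set.mem_Icc] at hu
    obtain ⟨x, hxm, rfl⟩ := h.exists_eq (show u < m by omega)
    refine ⟨x, ?_, rfl⟩
    have hPx : P < x := by
      by_contra hxP
      have := (h.sq_le_iff hP hQP hxm).2 (by omega)
      have := hbig (Q x) hu.1 hu.2
      omega
    have hxe : x ≤ e := by
      by_contra hxe
      have := hsmall x (by omega) hxm; omega
    simp only [coe_Ioc, Set.mem_Ioc]; omega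
  simp only [Nat.card_Icc, Nat.card_Ioc] at this
  omega

lemma eq_of_tail (h : IsStrong312LastZero m Q) (hm : 2 ≤ m) {v : ℕ} (hv : v < Q 0)
    (tail : ∀ z, m - 1 - v < z → z < m → Q z = m - 1 - z) : Q (m - 1 - v) = v := by
  have hQ0 := h.lt (show 0 < m by omega)
  have hlast := h.last
  by_contra hne
  obtain ⟨y, hy0, hye, hy, hQe⟩ := h.exists_of_tail hm hv tail hne
  set e := m - 1 - v
  rcases lt_or_ge e v with hev | hve
  · have hQv : Q v = e := by have := tail v hev (by omega); omega
    have hQy' : Q (m - 1 - y) = y := by have := tail (m - 1 - y) (by omega) (by omega); omega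
    exact h.avoids_sq (a := v) (b := m - 1 - y) (c := m - 1) (by omega) (by omega) (by omega)
      (by simp only [Function.comp_apply, hQy', hy, hlast]; omega)
      (by simp only [Function.comp_apply, hlast, hQv]; omega)
  obtain ⟨P, hPm, hP⟩ := h.exists_eq (show m - 1 < m by omega)
  have hPe : P ≤ e := by
    by_contra hPe; have := tail P (by omega) hPm; omega
  have hPQ0 := h.lt_Q_zero hm hPm hP
  have hbig : ∀ u, P ≤ u → u ≤ e → P < Q u := by
    intro u hPu hue
    rcases hPu.lt_or_eq with hPu | rfl
    · rcases hue.lt_or_eq with hue | rfl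
      · have := h.avoids.lt_of_eq_max h.bijOn hP hPu hue (by omega); omega
      · omega
    · omega
  rcases lt_or_ge P v with hPv | hvP
  · have hyP : P < y := by
      by_contra hyP
      have := (h.sq_le_iff hPm hP (show y < m by omega)).2 (by omega)
      have := hbig v hPv.le hve
      rw [hy] at *; omega
    have := h.avoids.lt_of_eq_max h.bijOn hP hyP hye (by omega)
    omega
  · exact h.false_of_lt_on_Icc_of_lt_on_Ioo hPm hP hPe (by omega) hbig fun x hx hxm => by
      have := tail x hx hxm; omega

lemma suffix (h : IsStrong312LastZero m Q) (hm : 2 ≤ m) {v : ℕ} (hv : v < Q 0) :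
    Q (m - 1 - v) = v := by
  induction v using Nat.strong_induction_on with
  | _ v ih =>
    refine h.eq_of_tail hm hv fun z hz hzm => ?_
    have := ih (m - 1 - z) (by omega) (by omega)
    rwa [show m - 1 - (m - 1 - z) = z by omega] at this

lemma eq_of_sub_le (h : IsStrong312LastZero m Q) (hm : 2 ≤ m) {x : ℕ} (hx : m - Q 0 ≤ x)
    (hxm : x < m) : Q x = m - 1 - x := by
  have := h.suffix hm (v := m - 1 - x) (by omega)
  rwa [show m - 1 - (m - 1 - x) = x by omega] at this

lemma le_of_lt_sub (h : IsStrong312LastZero m Q) (hm : 2 ≤ m) {x : ℕ} (hx : x < m - Q 0) :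
    Q 0 ≤ Q x := by
  by_contra hlt
  have := h.inj (show x < m by omega) (show m - 1 - Q x < m by omega) (h.suffix hm (by omega)).symm
  omega

lemma two_mul_sub_le (h : IsStrong312LastZero m Q) (hm : 2 ≤ m) : 2 * (m - Q 0) ≤ m := by
  have hQ0 := h.lt (show 0 < m by omega)
  have hlast := h.last
  by_contra hlt
  obtain ⟨P, hPm, hP⟩ := h.exists_eq (show m - 1 < m by omega)
  have hk := h.pos_Q_zero hm
  have hP0 : 0 < P := Nat.pos_of_ne_zero fun hP0 => by rw [hP0] at hP; omega
  have hPj : P < m - Q 0 := by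
    by_contra hPj; have := h.eq_of_sub_le hm (by omega) hPm; omega
  have hQQ0 : Q 0 < Q (Q 0) := by
    have := h.le_of_lt_sub hm (x := Q 0) (by omega)
    have := h.inj (show Q 0 < m by omega) (show 0 < m by omega)
    omega
  exact h.avoids_sq hP0 (show P < m - 1 by omega) (by omega)
    (by simp only [Function.comp_apply, hP, hlast]; omega)
    (by simp only [Function.comp_apply, hlast]; omega)

lemma lt_of_lt_of_lt_sub (h : IsStrong312LastZero m Q) (hm : 2 ≤ m) {b c : ℕ} (hbc : b < c)
    (hc : c < m - Q 0) : Q b < Q c := by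
  have hj := h.two_mul_sub_le hm
  have hsq : ∀ x < m - Q 0, Q (Q x) = m - 1 - Q x := fun x hx =>
    h.eq_of_sub_le hm (by have := h.le_of_lt_sub hm hx; omega) (h.lt (by omega))
  have hc0 : Q 0 < Q c := by
    have := h.le_of_lt_sub hm hc
    have := h.inj (show c < m by omega) (show 0 < m by omega)
    omega
  rcases Nat.eq_zero_or_pos b with rfl | hb
  · exact hc0
  by_contra hle
  have := h.inj (show b < m by omega) (show c < m by omega)
  have := hsq b (by omega); have := hsq c hc; have := hsq 0 (by omega)
  have := h.lt (show b < m by omega)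
  exact h.avoids_sq hb hbc (by omega) (by simp only [Function.comp_apply]; omega)
    (by simp only [Function.comp_apply]; omega)

lemma eq_add_of_lt_sub (h : IsStrong312LastZero m Q) (hm : 2 ≤ m) {i : ℕ} (hi : i < m - Q 0) :
    Q i = Q 0 + i := by
  have grow : ∀ a b, a ≤ b → b < m - Q 0 → Q a + (b - a) ≤ Q b := by
    intro a b hab hb
    induction b, hab using Nat.le_induction with
    | base => simp
    | succ b hab ih =>
      have := ih (by omega); have := h.lt_of_lt_of_lt_sub hm (by omega : b < b + 1) hb; omega
  have := grow 0 i (by omega) hi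
  have := grow i (m - Q 0 - 1) (by omega) (by omega)
  have := h.lt (show m - Q 0 - 1 < m by omega)
  omega

lemma eq_blockFun (h : IsStrong312LastZero m Q) {i : ℕ} (hi : i < m) :
    Q i = blockFun m (m - Q 0) i := by
  have hQ0 := h.lt (show 0 < m by omega)
  unfold blockFun
  rcases Nat.lt_or_ge m 2 with hm | hm
  · have := h.last; obtain rfl : i = 0 := by omega
    obtain rfl : m = 1 := by omega
    simp_all
  split_ifs with hij
  · rw [h.eq_add_of_lt_sub hm hij]; omega
  · exact h.eq_of_sub_le hm (by omega) hi

end IsStrong312LastZero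

lemma stronglyAvoids312_and_natApply_eq_zero_iff {k : ℕ} (q : Perm (Fin (k + 1))) :
    StronglyAvoids312 q ∧ natApply q k = 0 ↔
      ∃ j ∈ Icc 1 (max 1 ((k + 1) / 2)), blockPerm (k + 1) j = q := by
  constructor
  · rintro ⟨⟨hq, hq2⟩, h0⟩
    have h : IsStrong312LastZero (k + 1) (natApply q) :=
      ⟨bijOn_natApply q, (avoids312_iff q).1 hq, (avoids312_mul_self_iff q).1 hq2, h0⟩
    have := h.lt k.succ_pos
    refine ⟨k + 1 - natApply q 0, mem_Icc.2 ⟨by omega, ?_⟩,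
      eq_of_natApply_eq fun i hi => by rw [natApply_blockPerm hi, h.eq_blockFun hi]⟩
    rcases Nat.lt_or_ge k 1 with hk | hk
    · omega
    · have := h.two_mul_sub_le (by omega); omega
  · rintro ⟨j, hj, rfl⟩
    rw [mem_Icc] at hj
    refine ⟨stronglyAvoids312_blockPerm hj.2, ?_⟩
    rw [natApply_blockPerm k.lt_succ_self, blockFun]
    split_ifs <;> omega

lemma savLastZero_eq (k : ℕ) : savLastZero k = max 1 ((k + 1) / 2) := by
  classical
  rw [savLastZero, Nat.card_eq_fintype_card, Fintype.card_subtype]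
  have : ({q | StronglyAvoids312 q ∧ natApply q k = 0} : Finset (Perm (Fin (k + 1)))) =
      (Icc 1 (max 1 ((k + 1) / 2))).image (blockPerm (k + 1)) := by
    ext q; simp [stronglyAvoids312_and_natApply_eq_zero_iff]
  rw [this, card_image_of_injOn, Nat.card_Icc, Nat.add_sub_cancel]
  intro j hj j' hj' hjj'
  have := congrArg (natApply · 0) hjj'
  simp only [natApply_blockPerm k.succ_pos, blockFun] at this
  simp only [coe_Icc, Set.mem_Icc] at hj hj'
  split_ifs at this <;> omega

lemma sav312_zero : Sav312 0 = 1 :=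
  Nat.card_eq_one_iff_unique.2 ⟨inferInstance,
    ⟨1, fun ⟨a, _⟩ => a.elim0, fun ⟨a, _⟩ => a.elim0⟩⟩

lemma savLastZero_add_four (n : ℕ) :
    savLastZero (n + 4) + savLastZero (n + 1) = savLastZero (n + 3) + savLastZero (n + 2) := by
  simp only [savLastZero_eq]; omega

open PowerSeries

lemma mk_savLastZero_mul :
    PowerSeries.mk (fun k => (savLastZero k : ℚ)) * (1 - X - X ^ 2 + X ^ 3) =
      1 - X ^ 2 + X ^ 3 := by
  ext n
  match n with
  | 0 | 1 | 2 | 3 =>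
    norm_num [mul_sub, mul_add, coeff_mul_X_pow', coeff_succ_mul_X, savLastZero_eq]
  | n + 4 =>
    have hl : coeff (n + 4) (PowerSeries.mk (fun k => (savLastZero k : ℚ)) *
        (1 - X - X ^ 2 + X ^ 3)) = (savLastZero (n + 4) : ℚ) - savLastZero (n + 3) -
          savLastZero (n + 2) + savLastZero (n + 1) := by
      simp [mul_sub, mul_add, coeff_mul_X_pow', coeff_succ_mul_X]
    have hr : coeff (n + 4) (1 - X ^ 2 + X ^ 3 : ℚ⟦X⟧) = 0 := by simp [coeff_X_pow]
    rw [hl, hr]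
    linear_combination (by exact_mod_cast savLastZero_add_four n :
      (savLastZero (n + 4) + savLastZero (n + 1) : ℚ) = savLastZero (n + 3) + savLastZero (n + 2))

lemma mk_sav312_eq :
    PowerSeries.mk (fun n => (Sav312 n : ℚ)) = 1 + X *
      (PowerSeries.mk (fun k => (savLastZero k : ℚ)) * PowerSeries.mk fun n => (Sav312 n : ℚ)) := by
  ext n
  rcases n with _ | n
  · simp [sav312_zero]
  · rw [map_add, coeff_succ_X_mul, coeff_mul, coeff_mk, coeff_one, if_neg n.succ_ne_zero,
      zero_add, sav312_succ]
    simp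

lemma mk_sav312_mul :
    PowerSeries.mk (fun n => (Sav312 n : ℚ)) * (X ^ 4 - 2 * X ^ 3 + X ^ 2 + 2 * X - 1) =
      -X ^ 3 + X ^ 2 + X - 1 := by
  linear_combination (-(X ^ 3 - X ^ 2 - X + 1)) * mk_sav312_eq -
    X * PowerSeries.mk (fun n => (Sav312 n : ℚ)) * mk_savLastZero_mul

lemma sav312_add_four (n : ℕ) :
    Sav312 (n + 4) + 2 * Sav312 (n + 1) = 2 * Sav312 (n + 3) + Sav312 (n + 2) + Sav312 n := by
  have h := congrArg (coeff (n + 4)) mk_sav312_mul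
  have hl : coeff (n + 4) (PowerSeries.mk (fun n => (Sav312 n : ℚ)) *
      (X ^ 4 - 2 * X ^ 3 + X ^ 2 + 2 * X - 1)) = (Sav312 n : ℚ) - 2 * Sav312 (n + 1) +
        Sav312 (n + 2) + 2 * Sav312 (n + 3) - Sav312 (n + 4) := by
    simp [two_mul, mul_sub, mul_add, coeff_mul_X_pow', coeff_succ_mul_X]
  have hr : coeff (n + 4) (-X ^ 3 + X ^ 2 + X - 1 : ℚ⟦X⟧) = 0 := by simp [coeff_X_pow, coeff_X]
  rw [hl, hr] at h
  exact_mod_cast (by linear_combination -h : (Sav312 (n + 4) + 2 * Sav312 (n + 1) : ℚ) =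
    2 * Sav312 (n + 3) + Sav312 (n + 2) + Sav312 n)

end Pattern312

open PowerSeries in
theorem sav312_generating_function :
    (PowerSeries.mk fun n => (Sav312 n : ℚ)) * (X ^ 4 - 2 * X ^ 3 + X ^ 2 + 2 * X - 1)
      = -X ^ 3 + X ^ 2 + X - 1 ∧
    Sav312 0 = 1 ∧ Sav312 1 = 1 ∧ Sav312 2 = 2 ∧ Sav312 3 = 4 ∧
    Sav312 4 = 9 ∧ Sav312 5 = 19 ∧ Sav312 6 = 41 ∧
    ∀ n : ℕ, 4 ≤ n →
      Sav312 n + 2 * Sav312 (n - 3) =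
        2 * Sav312 (n - 1) + Sav312 (n - 2) + Sav312 (n - 4) := by
  refine ⟨Pattern312.mk_sav312_mul, Pattern312.sav312_zero, ?_, ?_, ?_, ?_, ?_, ?_,
    fun n hn => ?_⟩
  rotate_right
  · obtain ⟨n, rfl⟩ := Nat.exists_eq_add_of_le' hn
    simpa using Pattern312.sav312_add_four n
  all_goals simp [Pattern312.sav312_succ, Finset.Nat.sum_antidiagonal_eq_sum_range_succ_mk,
    Finset.sum_range_succ, Pattern312.savLastZero_eq, Pattern312.sav312_zero]
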